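/- For a complex symplectic matrix S, the spectral decomposition of ℂ^{2n} into the subspaces F_λ (equal to E_λ if |λ| = 1, and E_λ ⊕ E_{conj(λ)⁻¹} if |λ| > 1, where λ runs over eigenvalues with |λ| ≥ 1) is orthogonal with respect to the Krein form g(v,w) = ⟨iJ v, w⟩, and g restricted to each F_λ is non-degenerate. -/

import Mathlib

/-!
Since `Sᴴ J S = J`, the Krein form `g` is `S`-invariant. Writing `S = a + (S - a)` on `E_a` and
`S = b + (S - b)` on `E_b`, invariance and induction on the nilpotency orders give
`(1 - conj a * b) g(v, w) = 0`, so `E_a ⊥ E_b` unless `b = (conj a)⁻¹`. For `|λ|, |μ| ≥ 1` with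
`λ ≠ μ` no pair from `{λ, (conj λ)⁻¹} × {μ, (conj μ)⁻¹}` is of this form, so `F_λ ⊥ F_μ`.
The form `g` is nondegenerate on all of `ℂ^{2n}` (`g(v, iJ v) = ‖iJ v‖²`), and `ℂ^{2n}` is the
sum of the `E_a`; hence every nonzero `E_a` pairs nontrivially with `E_{(conj a)⁻¹}`, so `a ≠ 0`
and `(conj a)⁻¹` is an eigenvalue too, and the `F_λ` with `|λ| ≥ 1` exhaust `ℂ^{2n}`.
Nondegeneracy of `g` on each summand of an orthogonal decomposition follows from global
nondegeneracy.
-/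

open Matrix Polynomial

/-- The standard complex structure on `ℂ^{2n}`, in block form `(0, -I; I, 0)`. -/
noncomputable def Jc (n : ℕ) : Matrix (Fin n ⊕ Fin n) (Fin n ⊕ Fin n) ℂ :=
  Matrix.fromBlocks 0 (-1) 1 0

/-- The Krein Hermitian form `g(v, w) = ⟨iJ v, w⟩` on `ℂ^{2n}`. -/
noncomputable def kreinForm (n : ℕ) (v w : (Fin n ⊕ Fin n) → ℂ) : ℂ :=
  star ((Complex.I • Jc n).mulVec v) ⬝ᵥ w

/-- The generalized eigenspace `E_λ = ∪_j ker (S - λ I)^j`. -/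
noncomputable def genEig (n : ℕ) (S : Matrix (Fin n ⊕ Fin n) (Fin n ⊕ Fin n) ℂ) (lam : ℂ) :
    Submodule ℂ ((Fin n ⊕ Fin n) → ℂ) :=
  ⨆ j : ℕ, LinearMap.ker (Matrix.toLin' (S - lam • 1) ^ j)

/-- `F_λ = E_λ` when `|λ| = 1` and `F_λ = E_λ ⊕ E_{(conj λ)⁻¹}` when `|λ| > 1`; note that
for `|λ| = 1` one has `(conj λ)⁻¹ = λ`, so this uniform definition agrees with both cases. -/
noncomputable def Fspace (n : ℕ) (S : Matrix (Fin n ⊕ Fin n) (Fin n ⊕ Fin n) ℂ) (lam : ℂ) :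
    Submodule ℂ ((Fin n ⊕ Fin n) → ℂ) :=
  genEig n S lam ⊔ genEig n S ((starRingEnd ℂ lam)⁻¹)

open ComplexConjugate

theorem Module.End.maxGenEigenspace_eq_bot_of_not_hasEigenvalue {R M : Type*} [CommRing R]
    [AddCommGroup M] [Module R M] {f : Module.End R M} {a : R} (h : ¬ f.HasEigenvalue a) :
    f.maxGenEigenspace a = ⊥ := by
  by_contra hne
  exact h ((hasUnifEigenvalue_iff_hasUnifEigenvalue_one (k := ⊤) (by simp)).1 hne)

section Sesquilinear

variable {K M : Type*} [Field K] [StarRing K] [AddCommGroup M] [Module K M]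
  {B : M →ₗ⋆[K] M →ₗ[K] K} {f : Module.End K M}

theorem LinearMap.apply_eq_zero_of_mem_maxGenEigenspace (hB : ∀ v w, B (f v) (f w) = B v w)
    {a b : K} (hab : star a * b ≠ 1) {v w : M} (hv : v ∈ f.maxGenEigenspace a)
    (hw : w ∈ f.maxGenEigenspace b) : B v w = 0 := by
  suffices key : ∀ p q : ℕ, ∀ v w : M,
      ((f - a • 1) ^ p) v = 0 → ((f - b • 1) ^ q) w = 0 → B v w = 0 by
    obtain ⟨p, hp⟩ := (f.mem_maxGenEigenspace a v).1 hv
    obtain ⟨q, hq⟩ := (f.mem_maxGenEigenspace b w).1 hw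
    exact key p q v w hp hq
  intro p
  induction p with
  | zero => intro q v w hv _; simp_all
  | succ p ihp =>
    intro q
    induction q with
    | zero => intro v w _ hw; simp_all
    | succ q ihq =>
      intro v w hv hw
      have hv' : ((f - a • 1) ^ p) ((f - a • 1) v) = 0 := by
        rwa [pow_succ, Module.End.mul_apply] at hv
      have hw' : ((f - b • 1) ^ q) ((f - b • 1) w) = 0 := by
        rwa [pow_succ, Module.End.mul_apply] at hw
      have hfv : f v = a • v + (f - a • 1) v := by simp
      have hfw : f w = b • w + (f - b • 1) w := by simp
      -- by induction, expanding `B (f v) (f w) = B v w` leaves `B v w = star a * b * B v w`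
      have hfix := hB v w
      simp only [hfv, hfw, map_add, LinearMap.map_smulₛₗ₂, LinearMap.add_apply, map_smul,
        ihq v _ hv hw', ihp (q + 1) _ w hv' hw, ihp q _ _ hv' hw', starRingEnd_apply,
        smul_eq_mul, add_zero] at hfix
      have : (1 - star a * b) * B v w = 0 := by linear_combination -hfix
      exact (mul_eq_zero.1 this).resolve_left (sub_ne_zero.2 hab.symm)

theorem LinearMap.exists_star_mul_eq_one_hasEigenvalue [IsAlgClosed K] [FiniteDimensional K M]
    (hB : ∀ v w, B (f v) (f w) = B v w) (hsep : B.SeparatingLeft) {a : K}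
    (ha : f.HasEigenvalue a) : ∃ b, star a * b = 1 ∧ f.HasEigenvalue b := by
  by_contra! h
  obtain ⟨v, hv, hv0⟩ := ha.exists_hasEigenvector
  refine hv0 (hsep v fun w => ?_)
  have hle : ⨆ b, f.maxGenEigenspace b ≤ LinearMap.ker (B v) := iSup_le fun b => by
    by_cases hab : star a * b = 1
    · simp [Module.End.maxGenEigenspace_eq_bot_of_not_hasEigenvalue (h b hab)]
    · exact fun x hx => apply_eq_zero_of_mem_maxGenEigenspace hB hab
        (Module.End.eigenspace_le_maxGenEigenspace hv) hx
  exact hle (by simp [f.iSup_maxGenEigenspace_eq_top])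

end Sesquilinear

theorem LinearMap.SeparatingLeft.exists_ne_zero_of_biSup_eq_top {R M N ι : Type*}
    [CommRing R] [AddCommGroup M] [Module R M] [AddCommGroup N] [Module R N] {σ : R →+* R}
    {B : M →ₛₗ[σ] M →ₗ[R] N} (hB : B.SeparatingLeft) {s : Set ι} {F : ι → Submodule R M}
    (htop : ⨆ i ∈ s, F i = ⊤)
    (hortho : ∀ i ∈ s, ∀ j ∈ s, i ≠ j → ∀ v ∈ F i, ∀ w ∈ F j, B v w = 0)
    {i : ι} (hi : i ∈ s) {v : M} (hv : v ∈ F i) (hv0 : v ≠ 0) : ∃ w ∈ F i, B v w ≠ 0 := by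
  by_contra! h
  refine hv0 (hB v fun w => ?_)
  have hle : ⨆ j ∈ s, F j ≤ LinearMap.ker (B v) := iSup₂_le fun j hj => by
    by_cases hji : j = i
    · subst hji
      exact h
    · exact hortho i hi j hj (Ne.symm hji) v hv
  exact hle (htop ▸ Submodule.mem_top)

theorem Complex.eq_of_eq_inv_conj {a b : ℂ} (ha : 1 ≤ ‖a‖) (hb : 1 ≤ ‖b‖)
    (h : b = (conj a)⁻¹) : b = a := by
  have ha1 : ‖a‖ = 1 := le_antisymm (one_le_inv_iff₀.1 (by simpa [h] using hb)).2 ha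
  rw [h]
  exact inv_eq_of_mul_eq_one_right (by rw [Complex.conj_mul', ha1]; norm_num)

theorem Jc_mul_Jc (n : ℕ) : Jc n * Jc n = -1 := by
  rw [Jc, fromBlocks_multiply, ← fromBlocks_one, fromBlocks_neg]
  simp

noncomputable def kreinSesq (n : ℕ) :
    (Fin n ⊕ Fin n → ℂ) →ₗ⋆[ℂ] (Fin n ⊕ Fin n → ℂ) →ₗ[ℂ] ℂ :=
  LinearMap.mk₂'ₛₗ (starRingEnd ℂ) (RingHom.id ℂ) (kreinForm n)
    (fun _ _ _ => by simp [kreinForm, mulVec_add, add_dotProduct])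
    (fun _ _ _ => by simp [kreinForm, mulVec_smul, smul_dotProduct])
    (fun _ _ _ => by simp [kreinForm, dotProduct_add])
    (fun _ _ _ => by simp [kreinForm, dotProduct_smul])

@[simp]
theorem kreinSesq_apply (n : ℕ) (v w : Fin n ⊕ Fin n → ℂ) : kreinSesq n v w = kreinForm n v w :=
  rfl

open scoped ComplexOrder in
theorem kreinSesq_separatingLeft (n : ℕ) : (kreinSesq n).SeparatingLeft := by
  intro v hv
  have hK : (Complex.I • Jc n) *ᵥ v = 0 := dotProduct_star_self_eq_zero.1 (hv _)
  have hKK : (Complex.I • Jc n) * (Complex.I • Jc n) = 1 := by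
    simp [smul_smul, Jc_mul_Jc]
  rw [← one_mulVec v, ← hKK, ← mulVec_mulVec, hK, mulVec_zero]

section Symplectic

variable {n : ℕ} {S : Matrix (Fin n ⊕ Fin n) (Fin n ⊕ Fin n) ℂ}

theorem kreinSesq_toLin'_toLin' (hS : Sᴴ * Jc n * S = Jc n) (v w : Fin n ⊕ Fin n → ℂ) :
    kreinSesq n (toLin' S v) (toLin' S w) = kreinSesq n v w := by
  have hK : Sᴴ * (Complex.I • Jc n) * S = Complex.I • Jc n := by simp [hS]
  have hK' : (Complex.I • Jc n * S)ᴴ * S = (Complex.I • Jc n)ᴴ := by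
    conv_rhs => rw [← hK]
    simp [Matrix.mul_assoc]
  rw [kreinSesq_apply, kreinSesq_apply, toLin'_apply, toLin'_apply, kreinForm, kreinForm]
  rw [dotProduct_mulVec, mulVec_mulVec, star_mulVec, vecMul_vecMul, hK', star_mulVec]

theorem genEig_eq_maxGenEigenspace (lam : ℂ) :
    genEig n S lam = Module.End.maxGenEigenspace (toLin' S) lam := by
  simp_rw [genEig, ← Module.End.iSup_genEigenspace_eq, Module.End.genEigenspace_nat, map_sub,
    map_smul, toLin'_one, Module.End.one_eq_id]

theorem kreinForm_eq_zero_of_mem_genEig (hS : Sᴴ * Jc n * S = Jc n) {a b : ℂ}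
    (hab : b ≠ (conj a)⁻¹) {v w : Fin n ⊕ Fin n → ℂ} (hv : v ∈ genEig n S a)
    (hw : w ∈ genEig n S b) : kreinForm n v w = 0 := by
  rw [genEig_eq_maxGenEigenspace] at hv hw
  exact LinearMap.apply_eq_zero_of_mem_maxGenEigenspace (B := kreinSesq n)
    (kreinSesq_toLin'_toLin' hS) (fun h => hab (eq_inv_of_mul_eq_one_right h)) hv hw

theorem kreinForm_eq_zero_of_mem_Fspace (hS : Sᴴ * Jc n * S = Jc n) {lam mu : ℂ}
    (hlam : 1 ≤ ‖lam‖) (hmu : 1 ≤ ‖mu‖) (hne : lam ≠ mu) {v w : Fin n ⊕ Fin n → ℂ}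
    (hv : v ∈ Fspace n S lam) (hw : w ∈ Fspace n S mu) : kreinForm n v w = 0 := by
  have h₁ : mu ≠ (conj lam)⁻¹ := fun h => hne (Complex.eq_of_eq_inv_conj hlam hmu h).symm
  have h₂ : lam ≠ (conj mu)⁻¹ := fun h => hne (Complex.eq_of_eq_inv_conj hmu hlam h)
  obtain ⟨v₁, hv₁, v₂, hv₂, rfl⟩ := Submodule.mem_sup.1 hv
  obtain ⟨w₁, hw₁, w₂, hw₂, rfl⟩ := Submodule.mem_sup.1 hw
  change kreinSesq n (v₁ + v₂) (w₁ + w₂) = 0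
  simp only [map_add, LinearMap.add_apply, kreinSesq_apply]
  rw [kreinForm_eq_zero_of_mem_genEig hS h₁ hv₁ hw₁,
    kreinForm_eq_zero_of_mem_genEig hS (inv_injective.ne (star_injective.ne hne.symm)) hv₁ hw₂,
    kreinForm_eq_zero_of_mem_genEig hS (by simpa using hne.symm) hv₂ hw₁,
    kreinForm_eq_zero_of_mem_genEig hS (by simpa using h₂.symm) hv₂ hw₂]
  simp

theorem iSup_Fspace_eq_top (hS : Sᴴ * Jc n * S = Jc n) :
    (⨆ lam ∈ {z : ℂ | S.charpoly.IsRoot z ∧ 1 ≤ ‖z‖}, Fspace n S lam) = ⊤ := by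
  rw [eq_top_iff, ← Module.End.iSup_maxGenEigenspace_eq_top (toLin' S)]
  refine iSup_le fun mu => ?_
  by_cases hmu : Module.End.HasEigenvalue (toLin' S) mu
  swap
  · simp [Module.End.maxGenEigenspace_eq_bot_of_not_hasEigenvalue hmu]
  obtain ⟨lam, hmul, hlam⟩ := LinearMap.exists_star_mul_eq_one_hasEigenvalue
    (kreinSesq_toLin'_toLin' hS) (kreinSesq_separatingLeft n) hmu
  rw [← genEig_eq_maxGenEigenspace]
  rw [Module.End.hasEigenvalue_iff_isRoot_charpoly, charpoly_toLin'] at hmu hlam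
  rcases le_or_gt 1 ‖mu‖ with h | h
  · exact le_sup_left.trans (le_biSup (Fspace n S) ⟨hmu, h⟩)
  · have hnorm : ‖mu‖ * ‖lam‖ = 1 := by simpa using congrArg norm hmul
    have hmu' : mu = (conj lam)⁻¹ :=
      eq_inv_of_mul_eq_one_left (by simpa using congrArg conj hmul)
    have : 1 ≤ ‖lam‖ := by nlinarith [norm_nonneg mu]
    rw [hmu']
    exact le_sup_right.trans (le_biSup (Fspace n S) ⟨hlam, this⟩)

end Symplectic

/-- For a complex symplectic matrix `S`, the spaces `F_λ` (for eigenvalues `λ` with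
`|λ| ≥ 1`) decompose `ℂ^{2n}`, are pairwise orthogonal for the Krein form `g`, and `g`
restricted to each `F_λ` is non-degenerate. -/
theorem krein_decomposition (n : ℕ)
    (S : Matrix (Fin n ⊕ Fin n) (Fin n ⊕ Fin n) ℂ)
    (hS : Sᴴ * Jc n * S = Jc n) :
    (∀ lam mu : ℂ, S.charpoly.IsRoot lam → S.charpoly.IsRoot mu →
      1 ≤ ‖lam‖ → 1 ≤ ‖mu‖ → lam ≠ mu →
      ∀ v ∈ Fspace n S lam, ∀ w ∈ Fspace n S mu, kreinForm n v w = 0) ∧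
    (⨆ lam ∈ {z : ℂ | S.charpoly.IsRoot z ∧ 1 ≤ ‖z‖}, Fspace n S lam) = ⊤ ∧
    (∀ lam : ℂ, S.charpoly.IsRoot lam → 1 ≤ ‖lam‖ →
      ∀ v ∈ Fspace n S lam, v ≠ 0 → ∃ w ∈ Fspace n S lam, kreinForm n v w ≠ 0) := by
  have hortho : ∀ lam ∈ {z : ℂ | S.charpoly.IsRoot z ∧ 1 ≤ ‖z‖},
      ∀ mu ∈ {z : ℂ | S.charpoly.IsRoot z ∧ 1 ≤ ‖z‖}, lam ≠ mu →
      ∀ v ∈ Fspace n S lam, ∀ w ∈ Fspace n S mu, kreinForm n v w = 0 :=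
    fun _ hlam _ hmu hne _ hv _ hw => kreinForm_eq_zero_of_mem_Fspace hS hlam.2 hmu.2 hne hv hw
  refine ⟨fun lam mu hlam hmu hl hm => hortho lam ⟨hlam, hl⟩ mu ⟨hmu, hm⟩,
    iSup_Fspace_eq_top hS, fun lam hlam hl v => ?_⟩
  exact (kreinSesq_separatingLeft n).exists_ne_zero_of_biSup_eq_top (iSup_Fspace_eq_top hS) hortho
    ⟨hlam, hl⟩
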